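/- arXiv:1105.1297 — 4 statements merged into one kernel-verified Lean document; each statement's English description precedes it below -/
import Mathlib

section
/- Let p ≥ 2 and k be integers with k ≥ 2p and (p,k) ≠ (2,4). Then 1 − p/k > (2/k)^p + (1 − 2/k)^p. -/
/-!
With `x = 2/k` the claim reads `x^p + (1 - x)^p < 1 - p x / 2` under `p x ≤ 1`.
For `p = 2` this is `x < 1/2`, i.e. `k > 4`. For `p ≥ 3` bound `(1 - x)^p` by its second-order
Taylor polynomial `1 - p x + p(p-1)/2 x²` and `x^p` by `x³`; since `p x ≤ 1`, the quadratic
term is at most `(p-1) x / 2` and `x³ < x / 2`, so together they stay below `p x / 2`.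
-/

lemma one_sub_pow_le_one_sub_mul_add_sq {x : ℝ} (hx₀ : 0 ≤ x) (hx₁ : x ≤ 1) (n : ℕ) :
    (1 - x) ^ n ≤ 1 - n * x + n * (n - 1) / 2 * x ^ 2 := by
  induction n with
  | zero => simp
  | succ n ih =>
    have hn : (0 : ℝ) ≤ n * (n - 1) := by
      rcases n.eq_zero_or_pos with rfl | hpos
      · simp
      · have : (1 : ℝ) ≤ n := by exact_mod_cast hpos
        nlinarith
    calc (1 - x) ^ (n + 1) = (1 - x) * (1 - x) ^ n := pow_succ' _ _
      _ ≤ (1 - x) * (1 - n * x + n * (n - 1) / 2 * x ^ 2) :=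
          mul_le_mul_of_nonneg_left ih (by linarith)
      _ ≤ 1 - ↑(n + 1) * x + ↑(n + 1) * (↑(n + 1) - 1) / 2 * x ^ 2 := by
          push_cast
          nlinarith [mul_nonneg hn (pow_nonneg hx₀ 3)]

lemma sq_add_one_sub_sq_lt {x : ℝ} (hx₀ : 0 < x) (hx : x * 2 < 1) :
    x ^ 2 + (1 - x) ^ 2 < 1 - 2 * x / 2 := by
  nlinarith

lemma pow_add_one_sub_pow_lt {n : ℕ} (hn : 3 ≤ n) {x : ℝ} (hx₀ : 0 < x) (hxn : x * n ≤ 1) :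
    x ^ n + (1 - x) ^ n < 1 - n * x / 2 := by
  have hn' : (3 : ℝ) ≤ n := by exact_mod_cast hn
  have hx₁ : x ≤ 1 / 3 := by
    rw [le_div_iff₀ (by norm_num)]; nlinarith
  have hcube : x ^ n ≤ x ^ 3 := pow_le_pow_of_le_one hx₀.le (by linarith) hn
  have hcube_lt : x ^ 3 < x / 2 := by nlinarith [mul_pos hx₀ hx₀]
  have hquad : n * (n - 1) / 2 * x ^ 2 ≤ (n - 1) / 2 * x := by
    have : 0 ≤ (n - 1) / 2 * x := by
      apply mul_nonneg _ hx₀.le; linarith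
    nlinarith
  have htaylor := one_sub_pow_le_one_sub_mul_add_sq hx₀.le (by linarith) n
  linarith

/-- For integers `p ≥ 2`, `k ≥ 2p` with `(p, k) ≠ (2, 4)`, one has
`1 - p/k > (2/k)^p + (1 - 2/k)^p`. -/
theorem one_sub_div_gt_pow_add_pow (p k : ℕ) (hp : 2 ≤ p) (hk : 2 * p ≤ k)
    (hne : (p, k) ≠ (2, 4)) :
    (2 / (k : ℝ)) ^ p + (1 - 2 / (k : ℝ)) ^ p < 1 - (p : ℝ) / k := by
  have hk₀ : (0 : ℝ) < k := by exact_mod_cast (by omega : 0 < k)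
  have hpk : (p : ℝ) / k = p * (2 / k) / 2 := by field_simp
  rw [hpk]
  rcases hp.eq_or_lt with rfl | hp₃
  · have hk₄ : 4 < k := by
      by_contra! h
      exact hne (Prod.ext rfl (by omega))
    apply sq_add_one_sub_sq_lt (by positivity)
    rw [div_mul_eq_mul_div, div_lt_one hk₀]
    exact_mod_cast (by omega : 2 * 2 < k)
  · apply pow_add_one_sub_pow_lt hp₃ (by positivity)
    rw [div_mul_eq_mul_div, div_le_one hk₀]
    exact_mod_cast hk
end

section
/- Let G be a finite group, x ∈ G an element of prime order p, U ≤ G a subgroup, and let G act on the left cosets G/U. Then the number of cosets aU fixed by x equals |G|·|[x] ∩ U| / (|U|·|[x]|), where [x] denotes the conjugacy class of x in G. -/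
/-!
A coset `aU` is fixed by `x` iff `a⁻¹xa ∈ U`, so `|U|` times the number of fixed cosets counts
the `a ∈ G` conjugating `x` into `U`. These `a` are grouped by the conjugate `a⁻¹xa ∈ [x] ∩ U`,
each fibre being a coset of the centralizer `C(x)`; hence the count is `|[x] ∩ U| ⬝ |C(x)|`, and
`|C(x)| = |G| / |[x]|` by orbit-stabilizer.
-/

open MulAction

theorem MulAction.card_setOf_smul_mem {G α : Type*} [Group G] [MulAction G α] (b : α)
    (s : Set α) :
    Nat.card {g : G | g • b ∈ s} = Nat.card (stabilizer G b) * Nat.card ↥(orbit G b ∩ s) := by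
  have hpre : {g : G | g • b ∈ s} =
      QuotientGroup.mk ⁻¹' {q : G ⧸ stabilizer G b | ofQuotientStabilizer G b q ∈ s} := rfl
  rw [hpre, Nat.card_congr (QuotientGroup.preimageMkEquivSubgroupProdSet _ _), Nat.card_prod]
  congr 1
  exact Nat.card_congr <| ((orbitEquivQuotientStabilizer G b).symm.subtypeEquiv
    (q := fun y : orbit G b => (y : α) ∈ s) fun _ => Iff.rfl).trans
      (Equiv.subtypeSubtypeEquivSubtypeInter _ _)

section

variable {G : Type*} [Group G]

theorem ConjAct.orbit_eq_setOf_isConj (x : G) : orbit (ConjAct G) x = {g | IsConj x g} := by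
  ext g
  rw [ConjAct.mem_orbit_conjAct, isConj_comm, Set.mem_ofPred_eq]

theorem card_setOf_conj_mem (x : G) (s : Set G) :
    Nat.card {a : G | a⁻¹ * x * a ∈ s} =
      Nat.card (stabilizer (ConjAct G) x) * Nat.card {g : G | IsConj x g ∧ g ∈ s} := by
  have hinv : Nat.card {a : G | a⁻¹ * x * a ∈ s} = Nat.card {c : ConjAct G | c • x ∈ s} :=
    Nat.card_congr <| ((Equiv.inv G).trans ConjAct.toConjAct.toEquiv).subtypeEquiv fun a => by
      simp [ConjAct.smul_def]
  rw [hinv, card_setOf_smul_mem, ConjAct.orbit_eq_setOf_isConj]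
  rfl

theorem Subgroup.card_mul_card_fixed_cosets (U : Subgroup G) (x : G) :
    Nat.card U * Nat.card {a : G ⧸ U // x • a = a} = Nat.card {a : G | a⁻¹ * x * a ∈ U} := by
  have hpre : QuotientGroup.mk ⁻¹' {c : G ⧸ U | x • c = c} = {a : G | a⁻¹ * x * a ∈ U} := by
    ext a
    rw [Set.mem_preimage, Set.mem_ofPred_eq, MulAction.Quotient.smul_mk, eq_comm,
      QuotientGroup.eq, Set.mem_ofPred_eq, smul_eq_mul, mul_assoc]
  rw [← hpre, Nat.card_congr (QuotientGroup.preimageMkEquivSubgroupProdSet _ _), Nat.card_prod]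
  rfl

end

theorem card_fixed_cosets_eq_general (G : Type*) [Group G] [Fintype G]
    (x : G) (U : Subgroup G) :
    (Nat.card {a : G ⧸ U // x • a = a} : ℚ) =
      (Nat.card G * Nat.card {g : G | IsConj x g ∧ g ∈ U}) /
        (Nat.card U * Nat.card {g : G | IsConj x g}) := by
  have hfix : Nat.card U * Nat.card {a : G ⧸ U // x • a = a} =
      Nat.card (stabilizer (ConjAct G) x) * Nat.card {g : G | IsConj x g ∧ g ∈ U} :=
    (U.card_mul_card_fixed_cosets x).trans (card_setOf_conj_mem x U)
  have hclass :
      Nat.card G = Nat.card (stabilizer (ConjAct G) x) * Nat.card {g : G | IsConj x g} := by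
    rw [← ConjAct.orbit_eq_setOf_isConj, mul_comm, ← Nat.card_prod]
    exact Nat.card_congr ((orbitProdStabilizerEquivGroup (ConjAct G) x).trans
      ConjAct.ofConjAct.toEquiv).symm
  have : Nonempty {g : G | IsConj x g} := ⟨⟨x, IsConj.refl x⟩⟩
  have hclass_pos : 0 < Nat.card {g : G | IsConj x g} := Nat.card_pos
  have hU_pos : 0 < Nat.card U := Nat.card_pos
  rw [eq_div_iff (by positivity)]
  qify at hfix hclass
  linear_combination (Nat.card {g : G | IsConj x g} : ℚ) * hfix -
    (Nat.card {g : G | IsConj x g ∧ g ∈ U} : ℚ) * hclass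

/-- Let `G` be a finite group, `x ∈ G` of prime order `p`, and `U ≤ G`. The number
of cosets `aU` in `G/U` fixed by `x` is `|G| ⬝ |[x] ∩ U| / (|U| ⬝ |[x]|)`,
where `[x]` is the conjugacy class of `x`. -/
theorem card_fixed_cosets_eq (G : Type*) [Group G] [Fintype G] (p : ℕ) (hp : p.Prime)
    (x : G) (hx : orderOf x = p) (U : Subgroup G) :
    (Nat.card {a : G ⧸ U // x • a = a} : ℚ) =
      (Nat.card G * Nat.card {g : G | IsConj x g ∧ g ∈ U}) /
        (Nat.card U * Nat.card {g : G | IsConj x g}) :=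
  card_fixed_cosets_eq_general G x U
end

section
/- Let G be a finite group, p a prime, x ∈ G of order p, and suppose |N_G(⟨x⟩)| < p². Then every Sylow p-subgroup of G is cyclic of order p. -/
/-!
A Sylow `p`-subgroup `Q` containing `x` has order at least `p`. If its order were at least `p²`,
the centralizer of `x` in `Q` would already have order at least `p²`: either `x` is central in `Q`,
or that centralizer strictly contains the nontrivial centre of `Q`. Since
`C_G(x) ≤ N_G(⟨x⟩)`, this contradicts `|N_G(⟨x⟩)| < p²`, so `|Q| = p`.
-/

open Subgroup

namespace IsPGroup

variable {p : ℕ} [hp : Fact p.Prime]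

theorem card_eq_of_dvd_of_lt_sq {G : Type*} [Group G] [Finite G] (hG : IsPGroup p G)
    (hdvd : p ∣ Nat.card G) (hlt : Nat.card G < p ^ 2) : Nat.card G = p := by
  obtain ⟨n, hn⟩ := iff_card.mp hG
  rw [hn] at hdvd hlt ⊢
  have hn0 : n ≠ 0 := by
    rintro rfl
    exact hp.out.ne_one (Nat.dvd_one.mp hdvd)
  have hn2 : n < 2 := (Nat.pow_lt_pow_iff_right hp.out.one_lt).mp hlt
  obtain rfl : n = 1 := by omega
  exact pow_one p

theorem sq_le_card_of_ne_bot_of_lt {G : Type*} [Group G] [Finite G] {H K : Subgroup G}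
    (hK : IsPGroup p K) (hH : H ≠ ⊥) (hHK : H < K) : p ^ 2 ≤ Nat.card K := by
  obtain ⟨a, ha⟩ := iff_card.mp (hK.to_le hHK.le)
  obtain ⟨b, hb⟩ := iff_card.mp hK
  have ha0 : a ≠ 0 := by
    rintro rfl
    exact hH (card_eq_one.mp (by rw [ha, pow_zero]))
  have hab : a < b := by
    have hle : a ≤ b := (Nat.pow_dvd_pow_iff_le_right hp.out.one_lt).mp
      (ha ▸ hb ▸ card_dvd_of_le hHK.le)
    refine lt_of_le_of_ne hle ?_
    rintro rfl
    exact hHK.ne (eq_of_le_of_card_ge hHK.le (ha.trans hb.symm).ge)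
  calc p ^ 2 ≤ p ^ b := Nat.pow_le_pow_right hp.out.pos (by omega)
    _ = Nat.card K := hb.symm

theorem sq_le_card_centralizer {P : Type*} [Group P] [Finite P] (hP : IsPGroup p P)
    (hcard : p ^ 2 ≤ Nat.card P) (g : P) : p ^ 2 ≤ Nat.card (centralizer {g}) := by
  by_cases hg : g ∈ center P
  · rwa [centralizer_eq_top_iff_subset.mpr (Set.singleton_subset_iff.mpr hg), card_top]
  · have : Nontrivial P := Finite.one_lt_card_iff_nontrivial.mp
      ((Nat.one_lt_pow two_ne_zero hp.out.one_lt).trans_le hcard)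
    refine (hP.to_subgroup _).sq_le_card_of_ne_bot_of_lt hP.bot_lt_center.ne' ?_
    refine lt_of_le_of_ne (center_le_centralizer {g}) fun h => hg ?_
    exact h ▸ mem_centralizer_singleton_iff.mpr rfl

theorem sq_le_card_centralizer_of_mem {G : Type*} [Group G] [Finite G] {Q : Subgroup G}
    (hQ : IsPGroup p Q) (hcard : p ^ 2 ≤ Nat.card Q) {x : G} (hx : x ∈ Q) :
    p ^ 2 ≤ Nat.card (centralizer {x}) := by
  have hmap : (centralizer {(⟨x, hx⟩ : Q)}).map Q.subtype ≤ centralizer {x} := by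
    rintro _ ⟨c, hc, rfl⟩
    exact mem_centralizer_singleton_iff.mpr
      (congrArg Subtype.val (mem_centralizer_singleton_iff.mp hc))
  calc p ^ 2 ≤ Nat.card (centralizer {(⟨x, hx⟩ : Q)}) := hQ.sq_le_card_centralizer hcard _
    _ = Nat.card ((centralizer {(⟨x, hx⟩ : Q)}).map Q.subtype) :=
      (card_map_of_injective Q.subtype_injective).symm
    _ ≤ Nat.card (centralizer {x}) := card_le_of_le hmap

end IsPGroup

theorem Subgroup.centralizer_singleton_le_normalizer_zpowers {G : Type*} [Group G] (x : G) :
    centralizer {x} ≤ normalizer (zpowers x : Set G) := by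
  rw [zpowers_eq_closure, ← centralizer_closure]
  exact centralizer_le_normalizer _

/-- Let `G` be a finite group, `p` a prime, `x ∈ G` of order `p`, with
`|N_G(⟨x⟩)| < p²`. Then every Sylow `p`-subgroup of `G` is cyclic of order `p`. -/
theorem sylow_cyclic_of_small_normalizer (G : Type*) [Group G] [Fintype G] (p : ℕ)
    [Fact p.Prime] (x : G) (hx : orderOf x = p)
    (hN : Nat.card (Subgroup.normalizer (Subgroup.zpowers x : Set G)) < p ^ 2) :
    ∀ P : Sylow p G, IsCyclic P ∧ Nat.card P = p := by
  obtain ⟨Q, hxQ⟩ : ∃ Q : Sylow p G, zpowers x ≤ Q :=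
    (IsPGroup.of_card (by rw [Nat.card_zpowers, hx, pow_one])).exists_le_sylow
  have hxQ : x ∈ Q := hxQ (mem_zpowers x)
  have hQ_lt : Nat.card Q < p ^ 2 := by
    by_contra! hQ
    have hC := Q.isPGroup'.sq_le_card_centralizer_of_mem hQ hxQ
    exact (hC.trans (card_le_of_le (centralizer_singleton_le_normalizer_zpowers x))).not_gt hN
  have hQ : Nat.card Q = p :=
    Q.isPGroup'.card_eq_of_dvd_of_lt_sq (hx ▸ Q.orderOf_dvd_natCard hxQ) hQ_lt
  intro P
  have hP : Nat.card P = p := P.card_eq_multiplicity.trans (Q.card_eq_multiplicity.symm.trans hQ)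
  exact ⟨isCyclic_of_prime_card hP, hP⟩
end

section
/- In S_5, any set A of 5-cycles such that for all σ, τ ∈ A the quotient στ⁻¹ lies in some fixed conjugate of the Klein four-group V = {id, (12)(34), (13)(24), (14)(23)} has at most 2 elements. -/
open Equiv in
/-- The Klein four-group inside `S₄ ≤ S₅`, as a set of permutations of `Fin 5`. -/
def kleinFour : Set (Equiv.Perm (Fin 5)) :=
  {1, Equiv.swap 0 1 * Equiv.swap 2 3, Equiv.swap 0 2 * Equiv.swap 1 3,
    Equiv.swap 0 3 * Equiv.swap 1 2}

open Equiv in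
set_option maxRecDepth 100000 in
lemma key_five_cycles : ∀ r : Equiv.Perm (Fin 5), r^5 = 1 → r ≠ 1 →
    ¬(((swap 0 1 * swap 2 3 : Perm (Fin 5))*r)^5 = 1 ∧
      ((swap 0 2 * swap 1 3 : Perm (Fin 5))*r)^5 = 1) ∧
    ¬(((swap 0 1 * swap 2 3 : Perm (Fin 5))*r)^5 = 1 ∧
      ((swap 0 3 * swap 1 2 : Perm (Fin 5))*r)^5 = 1) ∧
    ¬(((swap 0 2 * swap 1 3 : Perm (Fin 5))*r)^5 = 1 ∧
      ((swap 0 3 * swap 1 2 : Perm (Fin 5))*r)^5 = 1) := by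
  decide

/-- Any set `A` of 5-cycles in `S₅` such that all quotients `σ τ⁻¹` (`σ, τ ∈ A`) lie in
a fixed conjugate of the Klein four-group has at most 2 elements. -/
theorem admissible_five_cycles_card_le_two (A : Finset (Equiv.Perm (Fin 5)))
    (hA : ∀ σ ∈ A, σ.cycleType = {5})
    (hadm : ∃ g : Equiv.Perm (Fin 5), ∀ σ ∈ A, ∀ τ ∈ A,
      σ * τ⁻¹ ∈ (fun v => g * v * g⁻¹) '' kleinFour) :
    A.card ≤ 2 := by
  by_contra h
  obtain ⟨σ, τ, ρ, hσ, hτ, hρ, hστ, hσρ, hτρ⟩ :=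
    Finset.two_lt_card_iff.mp (lt_of_not_ge h)
  obtain ⟨g, hg⟩ := hadm
  -- every element of A has order 5
  have pow5 : ∀ π ∈ A, π^5 = 1 ∧ π ≠ 1 := by
    intro π hπ
    have h1 : orderOf π = 5 := by
      have h2 := π.lcm_cycleType
      rw [hA π hπ] at h2
      simpa using h2.symm
    refine ⟨by have h3 := pow_orderOf_eq_one π; rwa [h1] at h3, ?_⟩
    intro he
    rw [he] at h1
    simp at h1
  -- quotients
  obtain ⟨v₂, hv₂V, hv₂⟩ := hg τ hτ ρ hρ
  obtain ⟨v₃, hv₃V, hv₃⟩ := hg σ hσ ρ hρ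
  simp only at hv₂ hv₃
  set r : Equiv.Perm (Fin 5) := g⁻¹ * ρ * g with hr
  have conj_pow : ∀ x : Equiv.Perm (Fin 5), (g⁻¹ * x * g)^5 = g⁻¹ * x^5 * g := by
    intro x
    rw [show g⁻¹ * x * g = g⁻¹ * x * g⁻¹⁻¹ by rw [inv_inv], conj_pow, inv_inv]
  have hr5 : r^5 = 1 := by
    rw [hr, conj_pow, (pow5 ρ hρ).1]; group
  have hr1 : r ≠ 1 := by
    intro he
    apply (pow5 ρ hρ).2
    have : ρ = g * r * g⁻¹ := by rw [hr]; group
    rw [this, he]; group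
  have hv₂r : v₂ * r = g⁻¹ * τ * g := by
    have : v₂ = g⁻¹ * (τ * ρ⁻¹) * g := by
      rw [← hv₂]; group
    rw [this, hr]; group
  have hv₃r : v₃ * r = g⁻¹ * σ * g := by
    have : v₃ = g⁻¹ * (σ * ρ⁻¹) * g := by
      rw [← hv₃]; group
    rw [this, hr]; group
  have hv₂5 : (v₂ * r)^5 = 1 := by rw [hv₂r, conj_pow, (pow5 τ hτ).1]; group
  have hv₃5 : (v₃ * r)^5 = 1 := by rw [hv₃r, conj_pow, (pow5 σ hσ).1]; group
  have hv₂1 : v₂ ≠ 1 := by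
    intro he; apply hτρ
    have : τ * ρ⁻¹ = 1 := by rw [← hv₂, he]; group
    have := mul_inv_eq_one.mp this
    exact this
  have hv₃1 : v₃ ≠ 1 := by
    intro he; apply hσρ
    have : σ * ρ⁻¹ = 1 := by rw [← hv₃, he]; group
    exact mul_inv_eq_one.mp this
  have hv₂₃ : v₂ ≠ v₃ := by
    intro he
    apply hστ
    have h2 : σ * ρ⁻¹ = τ * ρ⁻¹ := by rw [← hv₂, ← hv₃, he]
    have := mul_right_cancel h2
    exact this.symm ▸ rfl
  have hK := key_five_cycles r hr5 hr1
  simp only [kleinFour, Set.mem_insert_iff, Set.mem_singleton_iff] at hv₂V hv₃V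
  rcases hv₂V with h2 | h2 | h2 | h2 <;> rcases hv₃V with h3 | h3 | h3 | h3 <;>
    subst h2 <;> subst h3 <;>
    first
      | exact hv₂1 rfl
      | exact hv₃1 rfl
      | exact hv₂₃ rfl
      | exact hK.1 ⟨hv₂5, hv₃5⟩
      | exact hK.1 ⟨hv₃5, hv₂5⟩
      | exact hK.2.1 ⟨hv₂5, hv₃5⟩
      | exact hK.2.1 ⟨hv₃5, hv₂5⟩
      | exact hK.2.2 ⟨hv₂5, hv₃5⟩
      | exact hK.2.2 ⟨hv₃5, hv₂5⟩
end
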